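/- Every PTL-definable language L ⊆ Σ* has an R-trivial syntactic monoid; moreover, there exists an integer K > 0 such that (st)^K s ≡_L (st)^K for all strings s, t ∈ Σ*. -/

import Mathlib

/-- PTL formulas over alphabet `α`: atoms, conjunction, negation, and the past operator. -/
inductive PTL (α : Type*) : Type _
  | atom : α → PTL α
  | conj : PTL α → PTL α → PTL α
  | neg : PTL α → PTL α
  | past : PTL α → PTL α

/-- Satisfaction of a PTL formula in string `w` at (1-based) position `n ∈ {1,…,N+1}`. -/
def PTL.Sat {α : Type*} (w : List α) : PTL α → ℕ → Prop
  | .atom a, n => 1 ≤ n ∧ w[n - 1]? = some a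
  | .conj ψ₁ ψ₂, n => PTL.Sat w ψ₁ n ∧ PTL.Sat w ψ₂ n
  | .neg ψ, n => ¬ PTL.Sat w ψ n
  | .past ψ, n => ∃ m, 1 ≤ m ∧ m < n ∧ PTL.Sat w ψ m

/-- A string `w` of length `N` satisfies `ψ` iff `w, N+1 ⊨ ψ`. -/
def PTL.Models {α : Type*} (w : List α) (ψ : PTL α) : Prop :=
  PTL.Sat w ψ (w.length + 1)

/-- A language is PTL-definable if it is the set of strings satisfying some PTL formula. -/
def PTLDefinable {α : Type*} (L : Set (List α)) : Prop :=
  ∃ ψ : PTL α, ∀ w : List α, w ∈ L ↔ PTL.Models w ψ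

/-- `listPow w k` is the `k`-fold concatenation `w^k`. -/
def listPow {α : Type*} (w : List α) : ℕ → List α
  | 0 => []
  | k + 1 => w ++ listPow w k

/-- Syntactic congruence of a language `L`. -/
def SynEquiv {α : Type*} (L : Set (List α)) (s t : List α) : Prop :=
  ∀ u v : List α, u ++ s ++ v ∈ L ↔ u ++ t ++ v ∈ L

/-- The syntactic congruence of `L` as a monoid congruence on the free monoid `Σ*`. -/
def synCon {α : Type*} (L : Set (List α)) : Con (FreeMonoid α) where
  r s t := ∀ u v : FreeMonoid α,
    FreeMonoid.toList (u * s * v) ∈ L ↔ FreeMonoid.toList (u * t * v) ∈ L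
  iseqv := ⟨fun _ _ _ => Iff.rfl, fun h u v => (h u v).symm,
    fun h₁ h₂ u v => (h₁ u v).trans (h₂ u v)⟩
  mul' := by
    intro w x y z hwx hyz u v
    have h₁ := hwx u (y * v)
    have h₂ := hyz (u * x) v
    simp only [mul_assoc] at h₁ h₂ ⊢
    exact h₁.trans h₂

/-- The syntactic monoid of `L`: the quotient of `Σ*` by the syntactic congruence. -/
def SyntacticMonoid {α : Type*} (L : Set (List α)) : Type _ :=
  (synCon L).Quotient

noncomputable instance {α : Type*} (L : Set (List α)) : Monoid (SyntacticMonoid L) :=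
  inferInstanceAs (Monoid (synCon L).Quotient)

/-- A monoid `M` is R-trivial if `sM = tM` implies `s = t`. -/
def RTrivial (M : Type*) [Monoid M] : Prop :=
  ∀ s t : M, Set.range (fun m => s * m) = Set.range (fun m => t * m) → s = t

/-!
A formula of past-depth `d` cannot tell `u (st)^K s v` from `u (st)^K v` at matching positions
after the block, once `K ≥ d`: a past witness inside the extra copy of `s` can be moved back by
one period `|st|` into `u (st)^K`, where both strings agree, and inside a `p`-periodic stretch
such a move is invisible to depth-`d` formulas as soon as `d + 1` periods precede the witness.

R-triviality follows from `(ab)^K a = (ab)^K`: if `s = t a` and `t = s b`, then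
`s = s (ba)^K`, hence `t = s b = s (ba)^K b = s (ba)^K = s`.
-/

/-- Positions are 0-based here, unlike those of `PTL.Sat`. -/
def List.PeriodicFrom {α : Type*} (w : List α) (lo p : ℕ) : Prop :=
  ∀ i, lo ≤ i → i + p < w.length → w[i]? = w[i + p]?

theorem List.PeriodicFrom.of_prefix {α : Type*} {w w' : List α} {lo p : ℕ} (h : w <+: w')
    (hw' : w'.PeriodicFrom lo p) : w.PeriodicFrom lo p := by
  obtain ⟨r, rfl⟩ := h
  intro i hi hip
  rw [← List.getElem?_append_left (l₂ := r) (by omega),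
    ← List.getElem?_append_left (l₂ := r) hip]
  exact hw' i hi (by simp; omega)

section listPow

variable {α : Type*}

theorem length_listPow (x : List α) (k : ℕ) : (listPow x k).length = k * x.length := by
  induction k with
  | zero => simp [listPow]
  | succ k ih => simp only [listPow, List.length_append, ih]; ring

theorem listPow_succ' (x : List α) (k : ℕ) : listPow x (k + 1) = listPow x k ++ x := by
  induction k with
  | zero => simp [listPow]
  | succ k ih =>
    show x ++ listPow x (k + 1) = (x ++ listPow x k) ++ x
    rw [ih, List.append_assoc]

theorem periodicFrom_append_listPow (u x : List α) (k : ℕ) :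
    (u ++ listPow x k).PeriodicFrom u.length x.length := by
  intro i hi hik
  cases k with
  | zero => simp [listPow] at hik; omega
  | succ k =>
    have hlen : i < (u ++ listPow x k).length := by
      simp only [List.length_append, length_listPow, add_mul, one_mul] at hik ⊢; omega
    calc (u ++ listPow x (k + 1))[i]?
        = (u ++ listPow x k)[i]? := by
          rw [listPow_succ', ← List.append_assoc, List.getElem?_append_left hlen]
      _ = (listPow x k)[i - u.length]? := List.getElem?_append_right hi
      _ = (u ++ listPow x (k + 1))[i + x.length]? := by
          rw [listPow.eq_2, ← List.append_assoc, List.getElem?_append_right (by simp; omega)]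
          simp only [List.length_append]
          congr 1; omega

theorem FreeMonoid.toList_pow (a : FreeMonoid α) (k : ℕ) :
    (a ^ k).toList = listPow a.toList k := by
  induction k with
  | zero => rfl
  | succ k ih => rw [pow_succ', FreeMonoid.toList_mul, ih]; rfl

end listPow

namespace PTL

variable {α : Type*}

def pastDepth : PTL α → ℕ
  | atom _ => 0
  | conj φ ψ => max φ.pastDepth ψ.pastDepth
  | neg φ => φ.pastDepth
  | past φ => φ.pastDepth + 1

theorem sat_append_iff (x v : List α) (φ : PTL α) {m : ℕ} (hm : m ≤ x.length) :
    Sat (x ++ v) φ m ↔ Sat x φ m := by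
  induction φ generalizing m with
  | atom a =>
    simp only [Sat]
    by_cases h : 1 ≤ m
    · rw [List.getElem?_append_left (by omega)]
    · simp [h]
  | conj φ ψ ihφ ihψ => exact and_congr (ihφ hm) (ihψ hm)
  | neg φ ih => exact not_congr (ih hm)
  | past φ ih =>
    exact exists_congr fun m' => and_congr_right fun _ =>
      and_congr_right fun hm' => ih (by omega)

theorem sat_sub_iff_of_periodicFrom {w : List α} {lo p : ℕ} (hw : w.PeriodicFrom lo p)
    (φ : PTL α) {m : ℕ} (hlo : lo + (φ.pastDepth + 1) * p < m) (hm : m ≤ w.length) :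
    Sat w φ (m - p) ↔ Sat w φ m := by
  induction φ generalizing m with
  | atom a =>
    simp only [pastDepth, zero_add, one_mul] at hlo
    have hper := hw (m - p - 1) (by omega) (by omega)
    rw [show m - p - 1 + p = m - 1 by omega] at hper
    simp only [Sat, hper]
    exact and_congr_left' (by omega)
  | conj φ ψ ihφ ihψ =>
    have hφ := Nat.mul_le_mul_right p (le_max_left φ.pastDepth ψ.pastDepth)
    have hψ := Nat.mul_le_mul_right p (le_max_right φ.pastDepth ψ.pastDepth)
    simp only [pastDepth, add_mul, one_mul] at hlo ihφ ihψ
    exact and_congr (ihφ (by omega) hm) (ihψ (by omega) hm)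
  | neg φ ih => exact not_congr (ih hlo hm)
  | past φ ih =>
    simp only [pastDepth, add_mul, one_mul] at hlo ih
    constructor
    · rintro ⟨m', h1, h2, h3⟩
      exact ⟨m', h1, by omega, h3⟩
    · rintro ⟨m', h1, h2, h3⟩
      by_cases hm' : m' < m - p
      · exact ⟨m', h1, hm', h3⟩
      -- a witness in the last period before `m` is moved one period back
      · exact ⟨m' - p, by omega, by omega, (ih (by omega) (by omega)).mpr h3⟩

theorem sat_append_append_iff {x s v : List α} {lo p : ℕ} (hs : s.length ≤ p)
    (hper : (x ++ s).PeriodicFrom lo p) (φ : PTL α) (hx : lo + φ.pastDepth * p ≤ x.length)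
    {n : ℕ} (hn : x.length + s.length < n) :
    Sat (x ++ s ++ v) φ n ↔ Sat (x ++ v) φ (n - s.length) := by
  induction φ generalizing n with
  | atom a =>
    simp only [Sat]
    rw [List.getElem?_append_right (l₁ := x ++ s) (by rw [List.length_append]; omega),
      List.getElem?_append_right (l₁ := x) (by omega)]
    simp only [List.length_append]
    constructor <;> rintro ⟨-, h⟩ <;> refine ⟨by omega, ?_⟩ <;>
      convert h using 2 <;> omega
  | conj φ ψ ihφ ihψ =>
    have hφ := Nat.mul_le_mul_right p (le_max_left φ.pastDepth ψ.pastDepth)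
    have hψ := Nat.mul_le_mul_right p (le_max_right φ.pastDepth ψ.pastDepth)
    simp only [pastDepth] at hx
    exact and_congr (ihφ (by omega) hn) (ihψ (by omega) hn)
  | neg φ ih => exact not_congr (ih hx hn)
  | past φ ih =>
    simp only [pastDepth, add_mul, one_mul] at hx
    have hφ : lo + φ.pastDepth * p ≤ x.length := by omega
    have hxs : x.length + s.length = (x ++ s).length := (List.length_append ..).symm
    constructor
    · rintro ⟨m, h1, h2, h3⟩
      by_cases hm : m ≤ x.length
      · refine ⟨m, h1, by omega, ?_⟩
        rw [sat_append_iff _ _ _ hm]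
        rwa [List.append_assoc, sat_append_iff _ _ _ hm] at h3
      by_cases hm' : m ≤ x.length + s.length
      -- inside the copy of `s`, move one period back into `x`
      · rw [hxs] at hm'
        rw [sat_append_iff _ _ _ hm',
          ← sat_sub_iff_of_periodicFrom hper φ (by rw [add_mul, one_mul]; omega) hm',
          sat_append_iff _ _ _ (by simp; omega)] at h3
        exact ⟨m - p, by omega, by omega, (sat_append_iff _ _ _ (by omega)).mpr h3⟩
      · exact ⟨m - s.length, by omega, by omega, (ih hφ (by omega)).mp h3⟩
    · rintro ⟨m, h1, h2, h3⟩
      by_cases hm : m ≤ x.length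
      · refine ⟨m, h1, by omega, ?_⟩
        rw [List.append_assoc, sat_append_iff _ _ _ hm]
        rwa [sat_append_iff _ _ _ hm] at h3
      · refine ⟨m + s.length, by omega, by omega, ?_⟩
        rwa [ih hφ (by omega), Nat.add_sub_cancel]

theorem models_listPow_append_iff (ψ : PTL α) (u s t v : List α) {K : ℕ}
    (hK : ψ.pastDepth ≤ K) :
    Models (u ++ (listPow (s ++ t) K ++ s) ++ v) ψ ↔
      Models (u ++ listPow (s ++ t) K ++ v) ψ := by
  have hper : (u ++ listPow (s ++ t) K ++ s).PeriodicFrom u.length (s ++ t).length :=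
    (periodicFrom_append_listPow u (s ++ t) (K + 1)).of_prefix
      ⟨t, by rw [listPow_succ']; simp⟩
  have hdepth := Nat.mul_le_mul_right (s ++ t).length hK
  rw [Models, Models, ← List.append_assoc, sat_append_append_iff (by simp) hper ψ
    (by simp only [List.length_append, length_listPow] at hdepth ⊢; omega)
    (by simp only [List.length_append]; omega)]
  congr! 1
  simp only [List.length_append]
  omega

theorem synEquiv_listPow_append {L : Set (List α)} {ψ : PTL α}
    (hψ : ∀ w, w ∈ L ↔ Models w ψ) {K : ℕ} (hK : ψ.pastDepth ≤ K) (s t : List α) :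
    SynEquiv L (listPow (s ++ t) K ++ s) (listPow (s ++ t) K) := fun u v => by
  rw [hψ, hψ, models_listPow_append_iff ψ u s t v hK]

end PTL

theorem RTrivial.of_pow_mul_eq {M : Type*} [Monoid M] {K : ℕ}
    (h : ∀ a b : M, (a * b) ^ K * a = (a * b) ^ K) : RTrivial M := by
  intro s t hst
  obtain ⟨a, ha : t * a = s⟩ : s ∈ Set.range (t * ·) := by rw [← hst]; exact ⟨1, mul_one s⟩
  obtain ⟨b, hb : s * b = t⟩ : t ∈ Set.range (s * ·) := by rw [hst]; exact ⟨1, mul_one t⟩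
  have hs : ∀ k, s * (b * a) ^ k = s := by
    intro k
    induction k with
    | zero => rw [pow_zero, mul_one]
    | succ k ih => rw [pow_succ, ← mul_assoc, ih, ← mul_assoc, hb, ha]
  calc s = s * (b * a) ^ K := (hs K).symm
    _ = s * ((b * a) ^ K * b) := by rw [h]
    _ = t := by rw [← mul_assoc, hs, hb]

theorem synCon_pow_mul_eq {α : Type*} {L : Set (List α)} {K : ℕ}
    (h : ∀ s t : List α, SynEquiv L (listPow (s ++ t) K ++ s) (listPow (s ++ t) K))
    (a b : (synCon L).Quotient) : (a * b) ^ K * a = (a * b) ^ K := by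
  obtain ⟨a, rfl⟩ := Con.mk'_surjective a
  obtain ⟨b, rfl⟩ := Con.mk'_surjective b
  rw [← map_mul, ← map_pow, ← map_mul, Con.coe_mk', Con.eq]
  intro u v
  simpa only [FreeMonoid.toList_mul, FreeMonoid.toList_pow, List.append_assoc] using
    h a.toList b.toList u.toList v.toList

theorem ptl_definable_rtrivial_general {α : Type*} (L : Set (List α))
    (hL : PTLDefinable L) :
    RTrivial (SyntacticMonoid L) ∧
    ∃ K : ℕ, 0 < K ∧ ∀ s t : List α, SynEquiv L (listPow (s ++ t) K ++ s) (listPow (s ++ t) K) := by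
  obtain ⟨ψ, hψ⟩ := hL
  have hK := PTL.synEquiv_listPow_append hψ (Nat.le_succ ψ.pastDepth)
  exact ⟨RTrivial.of_pow_mul_eq (synCon_pow_mul_eq hK), _, Nat.succ_pos _, hK⟩

/-- Every PTL-definable language has an R-trivial syntactic monoid;
moreover there is `K > 0` with `(st)^K s ≡_L (st)^K` for all strings `s, t`. -/
theorem ptl_definable_rtrivial {α : Type*} [Fintype α] (L : Set (List α))
    (hL : PTLDefinable L) :
    RTrivial (SyntacticMonoid L) ∧
    ∃ K : ℕ, 0 < K ∧ ∀ s t : List α, SynEquiv L (listPow (s ++ t) K ++ s) (listPow (s ++ t) K) :=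
  ptl_definable_rtrivial_general L hL
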